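/- Let u : ℝ × ℝⁿ → ℝⁿ be smooth and suppose there exist continuously differentiable functions g, h, S : ℝ × ℝⁿ → ℝ such that ∂ₜu + (u·∇)u = ∇g + h∇S everywhere. Let x : ℝ → ℝⁿ be a streamline, x′(t) = u(t, x(t)), and let v : ℝ → ℝⁿ satisfy v′(t) = D_x u(t, x(t)) v(t). Then for all t, the derivative of t ↦ ⟨u(t, x(t)), v(t)⟩ equals ⟨∇(g + ½|u|²)(t, x(t)), v(t)⟩ + h(t, x(t)) ⟨∇S(t, x(t)), v(t)⟩, where |u|² denotes the function (t,x) ↦ ⟨u(t,x), u(t,x)⟩. -/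

import Mathlib

open scoped RealInnerProductSpace

lemma inner_gradient_eq_fderiv {E : Type*} [NormedAddCommGroup E] [InnerProductSpace ℝ E]
    [CompleteSpace E] (F : E → ℝ) (x v : E) (hF : DifferentiableAt ℝ F x) :
    ⟪gradient F x, v⟫ = fderiv ℝ F x v := by
  rw [hF.hasGradientAt.hasFDerivAt.fderiv]
  simp [InnerProductSpace.toDual_apply_apply]

/-- Transport law `D̄ₜu♭ = d(g + ½|u|²) + h dS` for the velocity 1-form
evaluated on a vector advected along a streamline. -/
theorem velocity_oneform_transport (n : ℕ)
    (u : ℝ × EuclideanSpace ℝ (Fin n) → EuclideanSpace ℝ (Fin n))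
    (hu : ContDiff ℝ (⊤ : ℕ∞) u)
    (g h S : ℝ × EuclideanSpace ℝ (Fin n) → ℝ)
    (hg : ContDiff ℝ 1 g) (hh : ContDiff ℝ 1 h) (hS : ContDiff ℝ 1 S)
    (euler : ∀ (t : ℝ) (x : EuclideanSpace ℝ (Fin n)),
      deriv (fun τ => u (τ, x)) t + fderiv ℝ (fun y => u (t, y)) x (u (t, x))
        = gradient (fun y => g (t, y)) x + h (t, x) • gradient (fun y => S (t, y)) x)
    (x : ℝ → EuclideanSpace ℝ (Fin n))
    (hx : ∀ t, HasDerivAt x (u (t, x t)) t)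
    (v : ℝ → EuclideanSpace ℝ (Fin n))
    (hv : ∀ t, HasDerivAt v (fderiv ℝ (fun y => u (t, y)) (x t) (v t)) t) :
    ∀ t : ℝ,
      HasDerivAt (fun τ => ⟪u (τ, x τ), v τ⟫)
        (⟪gradient (fun y => g (t, y) + (1 / 2) * ⟪u (t, y), u (t, y)⟫) (x t), v t⟫
          + h (t, x t) * ⟪gradient (fun y => S (t, y)) (x t), v t⟫) t := by
  intro t
  set p : ℝ × EuclideanSpace ℝ (Fin n) := (t, x t) with hp
  have hud : Differentiable ℝ u := hu.differentiable (by simp)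
  have h1 : HasFDerivAt u (fderiv ℝ u p) p := (hud p).hasFDerivAt
  -- spatial derivative
  have hspace : HasFDerivAt (fun y => u (t, y))
      ((fderiv ℝ u p).comp (ContinuousLinearMap.inr ℝ ℝ (EuclideanSpace ℝ (Fin n)))) (x t) :=
    h1.comp (x t) (hasFDerivAt_prodMk_right t (x t))
  have hDspace : fderiv ℝ (fun y => u (t, y)) (x t)
      = (fderiv ℝ u p).comp (ContinuousLinearMap.inr ℝ ℝ (EuclideanSpace ℝ (Fin n))) :=
    hspace.fderiv
  -- time derivative
  have htime : HasDerivAt (fun τ => u (τ, x t)) (fderiv ℝ u p ((1 : ℝ), 0)) t := by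
    have := h1.comp_hasDerivAt t ((hasDerivAt_id t).prodMk (hasDerivAt_const t (x t)))
    exact this
  -- full derivative along streamline
  have hU : HasDerivAt (fun τ => u (τ, x τ)) (fderiv ℝ u p ((1 : ℝ), u p)) t := by
    have := h1.comp_hasDerivAt t ((hasDerivAt_id t).prodMk (hx t))
    exact this
  have hsplit : fderiv ℝ u p ((1 : ℝ), u p)
      = deriv (fun τ => u (τ, x t)) t + fderiv ℝ (fun y => u (t, y)) (x t) (u p) := by
    rw [htime.deriv, hDspace]
    have h2 : ((1:ℝ), u p) = ((1:ℝ), (0 : EuclideanSpace ℝ (Fin n))) + ((0:ℝ), u p) := by simp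
    rw [h2, map_add]
    simp
  have hU' : HasDerivAt (fun τ => u (τ, x τ))
      (gradient (fun y => g (t, y)) (x t)
        + h (t, x t) • gradient (fun y => S (t, y)) (x t)) t := by
    rw [← euler t (x t), ← hsplit]; exact hU
  have hinner := hU'.inner ℝ (hv t)
  -- now identify the derivative value
  refine hinner.congr_deriv ?_
  symm
  -- differentiability of pieces
  have hgd : DifferentiableAt ℝ (fun y => g (t, y)) (x t) :=
    ((hg.differentiable one_ne_zero) p).comp (x t)
      ((differentiableAt_const t).prodMk differentiableAt_id)
  have hqd : DifferentiableAt ℝ (fun y => ⟪u (t, y), u (t, y)⟫) (x t) :=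
    hspace.differentiableAt.inner ℝ hspace.differentiableAt
  have hFd : DifferentiableAt ℝ
      (fun y => g (t, y) + (1 / 2) * ⟪u (t, y), u (t, y)⟫) (x t) :=
    hgd.add ((differentiableAt_const _).mul hqd)
  -- compute fderiv of F
  have hq : HasFDerivAt (fun y => ⟪u (t, y), u (t, y)⟫)
      ((fderivInnerCLM ℝ (u p, u p)).comp
        (((fderiv ℝ u p).comp (ContinuousLinearMap.inr ℝ ℝ _)).prod
          ((fderiv ℝ u p).comp (ContinuousLinearMap.inr ℝ ℝ _)))) (x t) :=
    hspace.inner ℝ hspace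
  have hF : HasFDerivAt (fun y => g (t, y) + (1 / 2) * ⟪u (t, y), u (t, y)⟫)
      (fderiv ℝ (fun y => g (t, y)) (x t) + ((1:ℝ)/2) •
        ((fderivInnerCLM ℝ (u p, u p)).comp
          (((fderiv ℝ u p).comp (ContinuousLinearMap.inr ℝ ℝ _)).prod
            ((fderiv ℝ u p).comp (ContinuousLinearMap.inr ℝ ℝ _))))) (x t) :=
    hgd.hasFDerivAt.add (hq.const_smul ((1:ℝ)/2)) |>.congr_fderiv rfl
  have key : ⟪gradient (fun y => g (t, y) + (1 / 2) * ⟪u (t, y), u (t, y)⟫) (x t), v t⟫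
      = ⟪gradient (fun y => g (t, y)) (x t), v t⟫
        + ⟪u p, fderiv ℝ (fun y => u (t, y)) (x t) (v t)⟫ := by
    rw [inner_gradient_eq_fderiv _ _ _ hFd, hF.fderiv,
      inner_gradient_eq_fderiv _ _ _ hgd, hDspace]
    simp only [ContinuousLinearMap.add_apply, ContinuousLinearMap.coe_smul',
      Pi.smul_apply, ContinuousLinearMap.coe_comp', Function.comp_apply,
      ContinuousLinearMap.prod_apply, fderivInnerCLM_apply,
      ContinuousLinearMap.inr_apply, smul_eq_mul]
    rw [real_inner_comm ((fderiv ℝ u p) ((0:ℝ), v t)) (u p)]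
    ring
  rw [key]
  rw [inner_add_left, real_inner_smul_left]
  ring
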